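/- arXiv:2301.10944 — 6 statements merged into one kernel-verified Lean document; each statement's English description precedes it below -/
import Mathlib

section
/- Let M be a nonempty finite set, λ > 0, w > 0, v : M → ℝ positive, and p : M → [0,1]. Suppose for all tx ∈ M: if p(tx) = 0 then v(tx)·exp(−λ·p(tx)) ≤ w; if 0 < p(tx) < 1 then v(tx)·exp(−λ·p(tx)) = w; if p(tx) = 1 then v(tx)·exp(−λ·p(tx)) ≥ w. Then for every q : M → [0,1] with ∑_{tx ∈ M} q(tx) = ∑_{tx ∈ M} p(tx), we have ∑_{tx ∈ M} p(tx)·v(tx)·exp(−λ·p(tx)) ≥ ∑_{tx ∈ M} q(tx)·v(tx)·exp(−λ·p(tx)). -/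
theorem equilibrium_sufficient {ι : Type*} (M : Finset ι) (hM : M.Nonempty)
    (lam w : ℝ) (hlam : 0 < lam) (hw : 0 < w)
    (v p : ι → ℝ) (hv : ∀ tx ∈ M, 0 < v tx)
    (hp0 : ∀ tx ∈ M, 0 ≤ p tx) (hp1 : ∀ tx ∈ M, p tx ≤ 1)
    (h0 : ∀ tx ∈ M, p tx = 0 → v tx * Real.exp (-lam * p tx) ≤ w)
    (hmid : ∀ tx ∈ M, 0 < p tx → p tx < 1 → v tx * Real.exp (-lam * p tx) = w)
    (h1 : ∀ tx ∈ M, p tx = 1 → w ≤ v tx * Real.exp (-lam * p tx)) :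
    ∀ q : ι → ℝ, (∀ tx ∈ M, 0 ≤ q tx) → (∀ tx ∈ M, q tx ≤ 1) →
      (∑ tx ∈ M, q tx = ∑ tx ∈ M, p tx) →
      ∑ tx ∈ M, q tx * (v tx * Real.exp (-lam * p tx)) ≤
        ∑ tx ∈ M, p tx * (v tx * Real.exp (-lam * p tx)) := by
  intro q hq0 hq1 hsum
  set f : ι → ℝ := fun tx => v tx * Real.exp (-lam * p tx) with hf
  have key : ∀ tx ∈ M, (q tx - p tx) * (f tx - w) ≤ 0 := by
    intro tx hx
    have hfx : f tx = v tx * Real.exp (-lam * p tx) := rfl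
    rcases eq_or_lt_of_le (hp0 tx hx) with h | hpos
    · have := h0 tx hx h.symm
      have hq := hq0 tx hx
      nlinarith
    · rcases eq_or_lt_of_le (hp1 tx hx) with h | hlt
      · have := h1 tx hx h
        have hq := hq1 tx hx
        nlinarith
      · have := hmid tx hx hpos hlt
        rw [hfx, this]
        simp
  have hle : ∑ tx ∈ M, (q tx - p tx) * (f tx - w) ≤ 0 :=
    Finset.sum_nonpos key
  have expand : ∑ tx ∈ M, (q tx - p tx) * (f tx - w)
      = (∑ tx ∈ M, q tx * f tx - ∑ tx ∈ M, p tx * f tx)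
        - w * (∑ tx ∈ M, q tx - ∑ tx ∈ M, p tx) := by
    rw [← Finset.sum_sub_distrib, mul_sub, Finset.mul_sum, Finset.mul_sum,
      ← Finset.sum_sub_distrib, ← Finset.sum_sub_distrib]
    exact Finset.sum_congr rfl fun x _ => by ring
  rw [expand, hsum] at hle
  linarith
end

section
/- Let M be a nonempty finite set, λ > 0, v : M → ℝ positive, k ∈ ℕ with k ≤ |M|, and p̂(tx) = (1/|M|)·(k + ∑_{tx' ∈ M} (ln v(tx) − ln v(tx'))/λ). Suppose 0 ≤ p̂(tx) ≤ 1 for all tx ∈ M. Then there exists w > 0 such that v(tx)·exp(−λ·p̂(tx)) = w for all tx ∈ M; consequently p̂ satisfies the equilibrium threshold conditions with threshold w. -/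
/-!
Taking logarithms, `log (v tx · exp (-λ p̂ tx)) = log v tx - λ p̂ tx`, and in `λ p̂ tx` the term
`log v tx` occurs `|M|` times with weight `1/|M|`, so it cancels exactly. What remains,
`(∑ log v - λ k) / |M|`, does not depend on `tx`; its exponential is the threshold `w`.
-/

open Finset

lemma neg_mul_closedForm_add_eq {ι : Type*} (M : Finset ι) {lam : ℝ} (hlam : lam ≠ 0)
    (k : ℝ) (a : ι → ℝ) {i : ι} (hi : i ∈ M) :
    -lam * ((1 / (M.card : ℝ)) * (k + ∑ j ∈ M, (a i - a j) / lam)) + a i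
      = (∑ j ∈ M, a j - lam * k) / M.card := by
  have hcard : (M.card : ℝ) ≠ 0 := Nat.cast_ne_zero.mpr (card_ne_zero_of_mem hi)
  rw [← sum_div, sum_sub_distrib, sum_const, nsmul_eq_mul]
  field_simp
  ring

lemma mul_exp_neg_mul_closedForm_eq {ι : Type*} (M : Finset ι) {lam : ℝ} (hlam : lam ≠ 0)
    (k : ℝ) {v : ι → ℝ} {i : ι} (hi : i ∈ M) (hvi : 0 < v i) :
    v i * Real.exp (-lam * ((1 / (M.card : ℝ)) *
        (k + ∑ j ∈ M, (Real.log (v i) - Real.log (v j)) / lam)))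
      = Real.exp ((∑ j ∈ M, Real.log (v j) - lam * k) / M.card) := by
  rw [← neg_mul_closedForm_add_eq M hlam k (fun j => Real.log (v j)) hi, Real.exp_add,
    Real.exp_log hvi, mul_comm]

theorem weak_equilibrium_general {ι : Type*} (M : Finset ι)
    (lam : ℝ) (hlam : 0 < lam) (v : ι → ℝ) (hv : ∀ tx ∈ M, 0 < v tx)
    (k : ℕ)
    (phat : ι → ℝ)
    (hphat : ∀ tx ∈ M, phat tx = (1 / (M.card : ℝ)) *
        ((k : ℝ) + ∑ tx' ∈ M, (Real.log (v tx) - Real.log (v tx')) / lam)) :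
    ∃ w : ℝ, 0 < w ∧ ∀ tx ∈ M,
      v tx * Real.exp (-lam * phat tx) = w ∧
      (phat tx = 0 → v tx * Real.exp (-lam * phat tx) ≤ w) ∧
      (0 < phat tx → phat tx < 1 → v tx * Real.exp (-lam * phat tx) = w) ∧
      (phat tx = 1 → w ≤ v tx * Real.exp (-lam * phat tx)) := by
  refine ⟨Real.exp ((∑ j ∈ M, Real.log (v j) - lam * k) / M.card), Real.exp_pos _,
    fun tx htx => ?_⟩
  have hw : v tx * Real.exp (-lam * phat tx)
      = Real.exp ((∑ j ∈ M, Real.log (v j) - lam * k) / M.card) := by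
    rw [hphat tx htx]
    exact mul_exp_neg_mul_closedForm_eq M hlam.ne' k htx (hv tx htx)
  exact ⟨hw, fun _ => hw.le, fun _ _ => hw, fun _ => hw.ge⟩

theorem weak_equilibrium {ι : Type*} (M : Finset ι) (hM : M.Nonempty)
    (lam : ℝ) (hlam : 0 < lam) (v : ι → ℝ) (hv : ∀ tx ∈ M, 0 < v tx)
    (k : ℕ) (hk : k ≤ M.card)
    (phat : ι → ℝ)
    (hphat : ∀ tx ∈ M, phat tx = (1 / (M.card : ℝ)) *
        ((k : ℝ) + ∑ tx' ∈ M, (Real.log (v tx) - Real.log (v tx')) / lam))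
    (hrange : ∀ tx ∈ M, 0 ≤ phat tx ∧ phat tx ≤ 1) :
    ∃ w : ℝ, 0 < w ∧ ∀ tx ∈ M,
      v tx * Real.exp (-lam * phat tx) = w ∧
      (phat tx = 0 → v tx * Real.exp (-lam * phat tx) ≤ w) ∧
      (0 < phat tx → phat tx < 1 → v tx * Real.exp (-lam * phat tx) = w) ∧
      (phat tx = 1 → w ≤ v tx * Real.exp (-lam * phat tx)) :=
  weak_equilibrium_general M lam hlam v hv k phat hphat
end

section
/- Let M be a nonempty finite set, λ > 0, v, s : M → ℝ with v, s positive, k ∈ ℝ, S = ∑_{tx'∈M} s(tx'), and p̂(tx) = (1/S)·(k + ∑_{tx''∈M} s(tx'')·(ln v(tx) − ln v(tx''))/λ). Then for every tx ∈ M, v(tx)·exp(−λ·p̂(tx)) = exp(−λk/S)·exp((1/S)·∑_{tx'∈M} s(tx')·ln v(tx')), independent of tx. -/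
theorem weighted_discounted_value_const {ι : Type*} (M : Finset ι) (hM : M.Nonempty)
    (lam : ℝ) (hlam : 0 < lam) (v s : ι → ℝ)
    (hv : ∀ tx ∈ M, 0 < v tx) (hs : ∀ tx ∈ M, 0 < s tx) (k : ℝ) :
    ∀ tx ∈ M,
      v tx * Real.exp (-lam * ((1 / ∑ tx' ∈ M, s tx') *
          (k + ∑ tx'' ∈ M, s tx'' * (Real.log (v tx) - Real.log (v tx'')) / lam)))
        = Real.exp (-(lam * k) / ∑ tx' ∈ M, s tx') *
            Real.exp ((1 / ∑ tx' ∈ M, s tx') * ∑ tx' ∈ M, s tx' * Real.log (v tx')) := by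
  intro tx htx
  set S : ℝ := ∑ tx' ∈ M, s tx' with hSdef
  have hS : 0 < S := Finset.sum_pos (fun i hi => hs i hi) hM
  set L : ℝ := Real.log (v tx) with hL
  set T : ℝ := ∑ tx' ∈ M, s tx' * Real.log (v tx') with hT
  have hsum : ∑ tx'' ∈ M, s tx'' * (L - Real.log (v tx'')) / lam
      = (L * S - T) / lam := by
    rw [← Finset.sum_div, Finset.mul_sum, hT, ← Finset.sum_sub_distrib]
    congr 1
    apply Finset.sum_congr rfl
    intro i hi
    ring
  rw [hsum]
  nth_rewrite 1 [show v tx = Real.exp L from (Real.exp_log (hv tx htx)).symm]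
  rw [← Real.exp_add, ← Real.exp_add]
  congr 1
  field_simp
  ring
end

section
/- Let p : M → ℝ on a finite set M = {1,…,m} with 0 ≤ p(j) ≤ 1 for all j and ∑_j p(j) = k where k ∈ ℕ. Define partial sums L(j) = ∑_{i<j} p(i). For r uniform on [0,1), the set D(r) = { j : ∃ n ∈ {0,…,k−1}, L(j) ≤ r + n < L(j) + p(j) } has cardinality exactly k. -/
theorem systematic_sampling_card (m k : ℕ) (p : ℕ → ℝ)
    (hp0 : ∀ j < m, 0 ≤ p j) (hp1 : ∀ j < m, p j ≤ 1)
    (hsum : ∑ j ∈ Finset.range m, p j = (k : ℝ))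
    (r : ℝ) (hr0 : 0 ≤ r) (hr1 : r < 1) :
    Set.ncard {j : ℕ | j < m ∧ ∃ n < k,
        (∑ i ∈ Finset.range j, p i) ≤ r + (n : ℝ) ∧
        r + (n : ℝ) < (∑ i ∈ Finset.range j, p i) + p j} = k := by
  classical
  set L : ℕ → ℝ := fun j => ∑ i ∈ Finset.range j, p i with hLdef
  have hmono : ∀ a b : ℕ, a ≤ b → b ≤ m → L a ≤ L b := by
    intro a b hab hbm
    apply Finset.sum_le_sum_of_subset_of_nonneg (Finset.range_subset_range.2 hab)
    intro i hi _
    exact hp0 i (lt_of_lt_of_le (Finset.mem_range.1 hi) hbm)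
  have hLm : L m = (k : ℝ) := hsum
  have hLsucc : ∀ j, L (j + 1) = L j + p j := by
    intro j; simp [hLdef, Finset.sum_range_succ]
  set f : ℕ → ℕ := fun n => Nat.findGreatest (fun j => L j ≤ r + n) m with hfdef
  have hrn : ∀ n, n < k → r + (n : ℝ) < (k : ℝ) := by
    intro n hn
    have h1 : (n : ℝ) + 1 ≤ (k : ℝ) := by exact_mod_cast hn
    linarith
  have hfspec : ∀ n, n < k →
      f n < m ∧ L (f n) ≤ r + n ∧ r + n < L (f n) + p (f n) := by
    intro n hn
    have h0 : L 0 ≤ r + n := by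
      simp only [hLdef, Finset.range_zero, Finset.sum_empty]
      positivity
    have hP : L (f n) ≤ r + n := by
      rw [hfdef]; exact Nat.findGreatest_spec (P := fun j => L j ≤ r + n) (Nat.zero_le m) h0
    have hle : f n ≤ m := Nat.findGreatest_le m
    have hlt : f n < m := by
      rcases lt_or_eq_of_le hle with h | h
      · exact h
      · exfalso
        have := hrn n hn
        rw [h] at hP
        rw [hLm] at hP
        linarith
    have hgr : ¬ (L (f n + 1) ≤ r + n) := by
      rw [hfdef]; exact Nat.findGreatest_is_greatest (P := fun j => L j ≤ r + n) (Nat.lt_succ_self _) hlt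
    rw [hLsucc] at hgr
    exact ⟨hlt, hP, lt_of_not_ge hgr⟩
  -- uniqueness of j for given x = r + n
  have huniq : ∀ (x : ℝ) (j j' : ℕ), j < m → j' < m →
      L j ≤ x → x < L j + p j → L j' ≤ x → x < L j' + p j' → j = j' := by
    intro x j j' hj hj' h1 h2 h1' h2'
    by_contra hne
    rcases Nat.lt_or_ge j j' with h | h
    · have : L (j + 1) ≤ L j' := hmono _ _ h (le_of_lt hj')
      rw [hLsucc] at this
      linarith
    · have hlt : j' < j := lt_of_le_of_ne h (Ne.symm hne)
      have : L (j' + 1) ≤ L j := hmono _ _ hlt (le_of_lt hj)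
      rw [hLsucc] at this
      linarith
  have hinj : Set.InjOn f (Finset.range k) := by
    intro a ha b hb hab
    simp only [Finset.coe_range, Set.mem_Iio] at ha hb
    obtain ⟨hma, h1a, h2a⟩ := hfspec a ha
    obtain ⟨hmb, h1b, h2b⟩ := hfspec b hb
    rw [hab] at h1a h2a
    have hp1' : p (f b) ≤ 1 := hp1 _ hmb
    have h1 : (a : ℝ) < (b : ℝ) + 1 := by linarith
    have h2 : (b : ℝ) < (a : ℝ) + 1 := by linarith
    have hab' : a < b + 1 := by exact_mod_cast h1
    have hba : b < a + 1 := by exact_mod_cast h2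
    omega
  have hset : {j : ℕ | j < m ∧ ∃ n < k, L j ≤ r + (n : ℝ) ∧ r + (n : ℝ) < L j + p j}
      = ↑((Finset.range k).image f) := by
    ext j
    simp only [Set.mem_setOf_eq, Finset.coe_image, Finset.coe_range, Set.mem_image,
      Set.mem_Iio]
    constructor
    · rintro ⟨hj, n, hn, h1, h2⟩
      obtain ⟨hm', h1', h2'⟩ := hfspec n hn
      exact ⟨n, hn, (huniq (r + n) (f n) j hm' hj h1' h2' h1 h2)⟩
    · rintro ⟨n, hn, rfl⟩
      obtain ⟨hm', h1', h2'⟩ := hfspec n hn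
      exact ⟨hm', n, hn, h1', h2'⟩
  rw [hset, Set.ncard_coe_finset, Finset.card_image_of_injOn, Finset.card_range]
  exact hinj
end

section
/- Let p : {1,…,m} → [0,1] with ∑_j p(j) = k ∈ ℕ, k ≤ m. Then there exists a probability distribution σ over k-element subsets of {1,…,m} such that for each j, ∑_{D : j ∈ D} σ(D) = p(j). -/
/-!
The marginals of mixed strategies over `k`-sets form a convex set: the image of a convex set of
distributions under a linear map. It contains the indicator vector of every `k`-set, which settles
the points of the hypersimplex `{p ∈ [0,1]^α | ∑ p = k}` without fractional coordinates. A point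
with one fractional coordinate has a second one, since `∑ p` is an integer. Moving mass between
these two coordinates, in either direction until one of them reaches `0` or `1`, exhibits `p` on a
segment between two points of the hypersimplex with fewer fractional coordinates, so induction on
their number concludes.
-/

open Finset

theorem mem_segment_add_smul_sub_smul {E : Type*} [AddCommGroup E] [Module ℝ E] (x v : E)
    {s t : ℝ} (hs : 0 ≤ s) (ht : 0 ≤ t) : x ∈ segment ℝ (x + s • v) (x - t • v) := by
  rw [mem_segment_iff_sameRay, sub_add_cancel_left, sub_sub_cancel_left, sameRay_neg_iff]
  exact (SameRay.sameRay_nonneg_smul_right v ht).nonneg_smul_left hs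

section

variable {α : Type*} [Fintype α] {k : ℕ}

variable (α) in
def hypersimplex (k : ℕ) : Set (α → ℝ) := {p | (∀ j, p j ∈ Set.Icc 0 1) ∧ ∑ j, p j = k}

noncomputable def fractionalSupport (p : α → ℝ) : Finset α := {j | p j ∈ Set.Ioo 0 1}

theorem mem_fractionalSupport {p : α → ℝ} {j : α} :
    j ∈ fractionalSupport p ↔ p j ∈ Set.Ioo 0 1 := by
  simp [fractionalSupport]

theorem eq_zero_or_eq_one_of_notMem_fractionalSupport {p : α → ℝ} {j : α}
    (hp : p j ∈ Set.Icc 0 1) (hj : j ∉ fractionalSupport p) : p j = 0 ∨ p j = 1 := by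
  rw [mem_fractionalSupport, Set.mem_Ioo, not_and_or, not_lt, not_lt] at hj
  rcases hj with h | h
  · exact Or.inl (le_antisymm h hp.1)
  · exact Or.inr (le_antisymm hp.2 h)

variable (α) in
def mixedStrategies (k : ℕ) : Set (Finset α → ℝ) :=
  {σ | (∀ D, 0 ≤ σ D) ∧ (∀ D, σ D ≠ 0 → D.card = k) ∧ ∑ D, σ D = 1}

theorem convex_mixedStrategies : Convex ℝ (mixedStrategies α k) := by
  rintro σ ⟨hσ0, hσk, hσ1⟩ τ ⟨hτ0, hτk, hτ1⟩ a b ha hb hab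
  refine ⟨fun D => ?_, fun D hD => ?_, ?_⟩
  · exact add_nonneg (mul_nonneg ha (hσ0 D)) (mul_nonneg hb (hτ0 D))
  · by_contra hD'
    simp [of_not_not (mt (hσk D) hD'), of_not_not (mt (hτk D) hD')] at hD
  · simp [sum_add_distrib, ← mul_sum, hσ1, hτ1, hab]

variable [DecidableEq α]

def marginal : (Finset α → ℝ) →ₗ[ℝ] α → ℝ where
  toFun σ j := ∑ D with j ∈ D, σ D
  map_add' σ τ := by ext j; simp [sum_add_distrib]
  map_smul' c σ := by ext j; simp [mul_sum]

theorem indicator_mem_marginal_image {D : Finset α} (hD : D.card = k) :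
    (fun j => if j ∈ D then 1 else 0) ∈ marginal '' mixedStrategies α k := by
  refine ⟨Pi.single D 1, ⟨fun E => ?_, fun E hE => ?_, by simp⟩, ?_⟩
  · by_cases h : E = D <;> simp [h]
  · by_cases h : E = D <;> simp_all
  · ext j; simp [marginal, Pi.single_apply]

theorem eq_indicator_of_fractionalSupport_eq_empty {p : α → ℝ} (hp : p ∈ hypersimplex α k)
    (h : fractionalSupport p = ∅) :
    ∃ D : Finset α, D.card = k ∧ p = fun j => if j ∈ D then 1 else 0 := by
  have hp01 j : p j = 0 ∨ p j = 1 :=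
    eq_zero_or_eq_one_of_notMem_fractionalSupport (hp.1 j) (by simp [h])
  have hp_eq : p = fun j => if j ∈ ({j | p j = 1} : Finset α) then 1 else 0 := by
    ext j; rcases hp01 j with h0 | h1 <;> simp [*]
  refine ⟨({j | p j = 1} : Finset α), ?_, hp_eq⟩
  have := hp.2
  rw [hp_eq] at this
  simpa using this

theorem exists_ne_mem_fractionalSupport {p : α → ℝ} (hp : p ∈ hypersimplex α k) {i : α}
    (hi : i ∈ fractionalSupport p) : ∃ j ≠ i, j ∈ fractionalSupport p := by
  by_contra! hint
  have hp01 j (hj : j ≠ i) : p j = 0 ∨ p j = 1 :=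
    eq_zero_or_eq_one_of_notMem_fractionalSupport (hp.1 j) (hint j hj)
  set n := #{j ∈ univ.erase i | p j = 1}
  have hrest : ∑ j ∈ univ.erase i, p j = n := by
    rw [← sum_boole]
    refine sum_congr rfl fun j hj => ?_
    rcases hp01 j (ne_of_mem_erase hj) with h0 | h1 <;> simp [*]
  have hpi : p i = k - n := by
    rw [← hp.2, ← add_sum_erase _ _ (mem_univ i), hrest]; ring
  rw [mem_fractionalSupport, hpi, Set.mem_Ioo] at hi
  have hlt : n < k := by exact_mod_cast sub_pos.mp hi.1
  have hgt : k < n + 1 := by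
    have : (k : ℝ) < n + 1 := by linarith [hi.2]
    exact_mod_cast this
  omega

theorem add_smul_single_sub_single_mem_hypersimplex {p : α → ℝ} (hp : p ∈ hypersimplex α k)
    {i j : α} (hij : i ≠ j) {c : ℝ} (hc0 : 0 ≤ c) (hci : c ≤ p i) (hcj : c ≤ 1 - p j) :
    p + c • (Pi.single j 1 - Pi.single i 1) ∈ hypersimplex α k := by
  refine ⟨fun x => ?_, ?_⟩
  · obtain ⟨hx0, hx1⟩ := hp.1 x
    rcases eq_or_ne x i with rfl | hxi
    · simp only [Pi.add_apply, Pi.smul_apply, Pi.sub_apply, Pi.single_eq_same,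
        Pi.single_eq_of_ne hij, smul_eq_mul, Set.mem_Icc]
      constructor <;> linarith
    rcases eq_or_ne x j with rfl | hxj
    · simp only [Pi.add_apply, Pi.smul_apply, Pi.sub_apply, Pi.single_eq_same,
        Pi.single_eq_of_ne hxi, smul_eq_mul, Set.mem_Icc]
      constructor <;> linarith
    simpa [hxi, hxj] using hp.1 x
  · simp [sum_add_distrib, sum_sub_distrib, ← mul_sum, hp.2]

theorem card_fractionalSupport_add_smul_single_sub_single_lt {p : α → ℝ} {i j : α} (hij : i ≠ j)
    (hi : i ∈ fractionalSupport p) (hj : j ∈ fractionalSupport p) {c : ℝ}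
    (hc : c = p i ∨ c = 1 - p j) :
    #(fractionalSupport (p + c • (Pi.single j 1 - Pi.single i 1))) < #(fractionalSupport p) := by
  set q := p + c • (Pi.single j 1 - Pi.single i 1)
  have hsub : fractionalSupport q ⊆ fractionalSupport p := by
    intro x hx
    rcases eq_or_ne x i with rfl | hxi
    · exact hi
    rcases eq_or_ne x j with rfl | hxj
    · exact hj
    simpa [mem_fractionalSupport, q, hxi, hxj] using hx
  obtain ⟨w, hw, hwq⟩ : ∃ w ∈ fractionalSupport p, w ∉ fractionalSupport q := by
    rcases hc with rfl | rfl
    · exact ⟨i, hi, by simp [mem_fractionalSupport, q, hij]⟩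
    · exact ⟨j, hj, by simp [mem_fractionalSupport, q, hij.symm]⟩
  exact card_lt_card (ssubset_of_subset_of_ne hsub fun h => hwq (h ▸ hw))

theorem hypersimplex_subset_marginal_image :
    hypersimplex α k ⊆ marginal '' mixedStrategies α k := by
  intro p hp
  induction hn : #(fractionalSupport p) using Nat.strong_induction_on generalizing p with
  | _ n ih =>
  obtain h | ⟨i, hi⟩ := (fractionalSupport p).eq_empty_or_nonempty
  · obtain ⟨D, hD, rfl⟩ := eq_indicator_of_fractionalSupport_eq_empty hp h
    exact indicator_mem_marginal_image hD
  obtain ⟨j, hji, hj⟩ := exists_ne_mem_fractionalSupport hp hi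
  have amount_nonneg {i j : α} (hi : i ∈ fractionalSupport p) (hj : j ∈ fractionalSupport p) :
      0 ≤ min (p i) (1 - p j) :=
    le_min (mem_fractionalSupport.1 hi).1.le (sub_nonneg.2 (mem_fractionalSupport.1 hj).2.le)
  have transfer_mem {i j : α} (hij : i ≠ j) (hi : i ∈ fractionalSupport p)
      (hj : j ∈ fractionalSupport p) :
      p + min (p i) (1 - p j) • (Pi.single j 1 - Pi.single i 1) ∈ marginal '' mixedStrategies α k :=
    ih _ (hn ▸ card_fractionalSupport_add_smul_single_sub_single_lt hij hi hj (min_choice _ _))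
      (add_smul_single_sub_single_mem_hypersimplex hp hij (amount_nonneg hi hj)
        (min_le_left _ _) (min_le_right _ _)) rfl
  have h₁ := transfer_mem hji.symm hi hj
  have h₂ := transfer_mem hji hj hi
  rw [← neg_sub (Pi.single j 1 : α → ℝ), smul_neg, ← sub_eq_add_neg] at h₂
  exact (convex_mixedStrategies.linear_image marginal).segment_subset h₁ h₂
    (mem_segment_add_smul_sub_smul p _ (amount_nonneg hi hj) (amount_nonneg hj hi))

end

theorem mixed_strategy_exists_general (m k : ℕ) (p : Fin m → ℝ)
    (hp0 : ∀ j, 0 ≤ p j) (hp1 : ∀ j, p j ≤ 1)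
    (hsum : ∑ j, p j = (k : ℝ)) :
    ∃ σ : Finset (Fin m) → ℝ,
      (∀ D, 0 ≤ σ D) ∧
      (∀ D, σ D ≠ 0 → D.card = k) ∧
      (∑ D : Finset (Fin m), σ D = 1) ∧
      (∀ j, ∑ D ∈ Finset.univ.filter (fun D : Finset (Fin m) => j ∈ D), σ D = p j) := by
  obtain ⟨σ, ⟨hσ0, hσk, hσ1⟩, hσp⟩ :=
    hypersimplex_subset_marginal_image ⟨fun j => ⟨hp0 j, hp1 j⟩, hsum⟩
  exact ⟨σ, hσ0, hσk, hσ1, fun j => congrFun hσp j⟩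

theorem mixed_strategy_exists (m k : ℕ) (hk : k ≤ m) (p : Fin m → ℝ)
    (hp0 : ∀ j, 0 ≤ p j) (hp1 : ∀ j, p j ≤ 1)
    (hsum : ∑ j, p j = (k : ℝ)) :
    ∃ σ : Finset (Fin m) → ℝ,
      (∀ D, 0 ≤ σ D) ∧
      (∀ D, σ D ≠ 0 → D.card = k) ∧
      (∑ D : Finset (Fin m), σ D = 1) ∧
      (∀ j, ∑ D ∈ Finset.univ.filter (fun D : Finset (Fin m) => j ∈ D), σ D = p j) :=
  mixed_strategy_exists_general m k p hp0 hp1 hsum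
end

section
/- Let M be a finite set, p̂ : M → ℝ, and F(x) = ∑_{tx∈M} min(max(p̂(tx) − x, 0), 1). If x₁ ≤ x₂ are both solutions of F(x) = k for some 0 < k, then the clipped functions coincide: min(max(p̂(tx) − x₁,0),1) = min(max(p̂(tx) − x₂,0),1) for all tx ∈ M. -/
theorem waterlevel_unique_clip {ι : Type*} (M : Finset ι) (phat : ι → ℝ) (k : ℝ)
    (hk : 0 < k) (x1 x2 : ℝ) (hx : x1 ≤ x2)
    (h1 : ∑ tx ∈ M, min (max (phat tx - x1) 0) 1 = k)
    (h2 : ∑ tx ∈ M, min (max (phat tx - x2) 0) 1 = k) :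
    ∀ tx ∈ M, min (max (phat tx - x1) 0) 1 = min (max (phat tx - x2) 0) 1 := by
  have hle : ∀ tx ∈ M, min (max (phat tx - x2) 0) 1 ≤ min (max (phat tx - x1) 0) 1 := by
    intro tx _
    exact min_le_min (max_le_max (by linarith) le_rfl) le_rfl
  have hsum : ∑ tx ∈ M, min (max (phat tx - x2) 0) 1
      = ∑ tx ∈ M, min (max (phat tx - x1) 0) 1 := by rw [h1, h2]
  intro tx htx
  exact ((Finset.sum_eq_sum_iff_of_le hle).mp hsum tx htx).symm
end
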